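/- arXiv:2111.03852 — 2 statements merged into one kernel-verified Lean document; each statement's English description precedes it below -/
import Mathlib

section
/- Let $0 < \alpha < n$, $m \geq 1$, and let $A_1, \dots, A_m$ be $n \times n$ invertible real matrices. Let $\alpha_1, \dots, \alpha_m$ be positive reals with $\alpha_1 + \cdots + \alpha_m = n - \alpha$. Then there is a constant $C > 0$ such that for every measurable $f : \mathbb{R}^n \to \mathbb{C}$ and every $x \in \mathbb{R}^n$, $\left| \int_{\mathbb{R}^n} |x - A_1 y|^{-\alpha_1} \cdots |x - A_m y|^{-\alpha_m} f(y)\, dy \right| \leq C \sum_{j=1}^m \int_{\mathbb{R}^n} |A_j^{-1} x - y|^{\alpha - n} |f(y)|\, dy$, whenever the left-hand integral converges absolutely. -/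
open MeasureTheory Metric ENNReal

noncomputable section

/-- `ℝⁿ` with the Euclidean norm. -/
abbrev En (n : ℕ) := EuclideanSpace ℝ (Fin n)

/-- The Muckenhoupt class `𝒜₁`: `w` is a weight and the average of `w` over any ball is
controlled by the essential infimum of `w` over that ball. -/
def IsA1 (n : ℕ) (w : En n → ℝ) : Prop :=
  (∀ x, 0 ≤ w x) ∧ MeasureTheory.LocallyIntegrable w ∧
  ∃ C > 0, ∀ (x : En n) (r : ℝ), 0 < r →
    (∫ y in ball x r, w y) ≤
      C * (volume (ball x r)).toReal * essInf w (volume.restrict (ball x r))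

/-- The Muckenhoupt class `𝒜_p` for `1 < p < ∞`. -/
def IsAp (n : ℕ) (p : ℝ) (w : En n → ℝ) : Prop :=
  (∀ x, 0 ≤ w x) ∧ MeasureTheory.LocallyIntegrable w ∧
  ∃ C > 0, ∀ (x : En n) (r : ℝ), 0 < r →
    ((∫ y in ball x r, w y) / (volume (ball x r)).toReal) *
      ((∫ y in ball x r, w y ^ (-(1 / (p - 1)))) / (volume (ball x r)).toReal) ^ (p - 1) ≤ C

/-- The Muckenhoupt class `𝒜_∞ = ⋃_{1 ≤ p < ∞} 𝒜_p`. -/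
def IsAinfty (n : ℕ) (w : En n → ℝ) : Prop :=
  IsA1 n w ∨ ∃ p, 1 < p ∧ IsAp n p w

/-- The reverse Hölder class `RH_t`. -/
def IsRH (n : ℕ) (t : ℝ) (w : En n → ℝ) : Prop :=
  ∃ C > 0, ∀ (x : En n) (r : ℝ), 0 < r →
    ((∫ y in ball x r, w y ^ t) / (volume (ball x r)).toReal) ^ (1 / t) ≤
      C * ((∫ y in ball x r, w y) / (volume (ball x r)).toReal)

/-- The critical reverse Hölder index `r_w = sup { r > 1 : w ∈ RH_r }`, as an
extended nonnegative real (it may be `∞`). -/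
def rIndex (n : ℕ) (w : En n → ℝ) : ℝ≥0∞ :=
  sSup (ENNReal.ofReal '' {r : ℝ | 1 < r ∧ IsRH n r w})

/-- The quantity `r_w/(r_w - 1)`, interpreted as `1` when `r_w = ∞`. -/
def rRatio (n : ℕ) (w : En n → ℝ) : ℝ :=
  if rIndex n w = ⊤ then 1
  else (rIndex n w).toReal / ((rIndex n w).toReal - 1)

/-- The critical index `q̃_w = inf { q > 1 : w ∈ 𝒜_q }`. -/
def qIndex (n : ℕ) (w : En n → ℝ) : ℝ :=
  sInf {q : ℝ | 1 < q ∧ IsAp n q w}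

/-- The fractional maximal operator `M_β` (for `β = 0` this is the Hardy–Littlewood
maximal operator), `M_β f x = sup_{B ∋ x} |B|^{β/n - 1} ∫_B |f|`. -/
def fracMax (n : ℕ) (β : ℝ) (f : En n → ℝ) (x : En n) : ℝ≥0∞ :=
  ⨆ (z : En n) (r : ℝ) (_ : 0 < r) (_ : x ∈ ball z r),
    (volume (ball z r)) ^ (β / n - 1) * ∫⁻ y in ball z r, ‖f y‖₊

/-- The class `𝒜_{p,q}` for `1 < p ≤ q < ∞`. -/
def IsApq (n : ℕ) (p q : ℝ) (v : En n → ℝ) : Prop :=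
  ∃ C > 0, ∀ (x : En n) (r : ℝ), 0 < r →
    ((∫ y in ball x r, v y ^ q) / (volume (ball x r)).toReal) ^ (1 / q) *
      ((∫ y in ball x r, v y ^ (-(p / (p - 1)))) / (volume (ball x r)).toReal) ^ ((p - 1) / p) ≤ C

/-- The class `𝒜_{1,q}`. -/
def IsA1q (n : ℕ) (q : ℝ) (v : En n → ℝ) : Prop :=
  ∃ C > 0, ∀ (x : En n) (r : ℝ), 0 < r →
    ((∫ y in ball x r, v y ^ q) / (volume (ball x r)).toReal) ^ (1 / q) ≤
      C * essInf v (volume.restrict (ball x r))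

/-- The set `𝒮_N` of Schwartz functions all of whose seminorms of order `≤ N` are `≤ 1`. -/
def SNball (n N : ℕ) : Set (SchwartzMap (En n) ℝ) :=
  {φ | ∀ k l : ℕ, k ≤ N → l ≤ N → SchwartzMap.seminorm ℝ k l φ ≤ 1}

/-- The grand maximal function `𝓜_N f (x) = sup_{t > 0} sup_{φ ∈ 𝒮_N} |(t^{-n} φ(t⁻¹ ·) * f)(x)|`. -/
def grandMax (n N : ℕ) (f : En n → ℝ) (x : En n) : ℝ≥0∞ :=
  ⨆ (t : ℝ) (_ : 0 < t) (φ : SchwartzMap (En n) ℝ) (_ : φ ∈ SNball n N),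
    ENNReal.ofReal |∫ y, t ^ (-(n : ℝ)) * φ (t⁻¹ • (x - y)) * f y|

/-- The weighted `L^p` "norm" `(∫ g^p v)^{1/p}` of an `ℝ≥0∞`-valued function `g`,
with weight `v`. -/
def wNorm (n : ℕ) (v : En n → ℝ) (p : ℝ) (g : En n → ℝ≥0∞) : ℝ≥0∞ :=
  (∫⁻ x, g x ^ p * ENNReal.ofReal (v x)) ^ (1 / p)

end

/-!
Weighted AM–GM with weights `a j / (n - α)` bounds the product kernel by a convex combination of
the powers `|x - A j y|^{α - n}`, and since `A j⁻¹ (x - A j y) = A j⁻¹ x - y`, each of these is at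
most `‖A j⁻¹‖^{n - α} |A j⁻¹ x - y|^{α - n}`. Integrating against `|f|` gives the estimate.
-/

section KernelBounds

variable {ι : Type*} [Fintype ι]

theorem Real.prod_rpow_neg_le_sum_mul_rpow_neg {d a : ι → ℝ} (hd : ∀ i, 0 ≤ d i)
    (ha : ∀ i, 0 ≤ a i) {s : ℝ} (hs : 0 < s) (hsum : ∑ i, a i = s) :
    ∏ i, d i ^ (-a i) ≤ ∑ i, a i / s * d i ^ (-s) := by
  have hw : ∑ i, a i / s = 1 := by rw [← Finset.sum_div, hsum, div_self hs.ne']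
  calc ∏ i, d i ^ (-a i) = ∏ i, (d i ^ (-s)) ^ (a i / s) := by
        refine Finset.prod_congr rfl fun i _ => ?_
        rw [← Real.rpow_mul (hd i)]
        congr 1
        field_simp
    _ ≤ ∑ i, a i / s * d i ^ (-s) :=
        Real.geom_mean_le_arith_mean_weighted _ _ _ (fun i _ => div_nonneg (ha i) hs.le) hw
          fun i _ => Real.rpow_nonneg (hd i) _

theorem ContinuousLinearEquiv.norm_rpow_neg_le {E F : Type*} [NormedAddCommGroup E]
    [NormedSpace ℝ E] [NormedAddCommGroup F] [NormedSpace ℝ F] (L : E ≃L[ℝ] F) (v : E)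
    {s : ℝ} (hs : 0 ≤ s) :
    ‖v‖ ^ (-s) ≤ ‖(L : E →L[ℝ] F)‖ ^ s * ‖L v‖ ^ (-s) := by
  rcases eq_or_ne v 0 with rfl | hv
  · rcases hs.eq_or_lt with rfl | hs
    · simp
    · simp [Real.zero_rpow (neg_ne_zero.2 hs.ne')]
  have hLv : 0 < ‖L v‖ := norm_pos_iff.2 (L.map_ne_zero_iff.2 hv)
  have hLv_le : ‖L v‖ ≤ ‖(L : E →L[ℝ] F)‖ * ‖v‖ := (L : E →L[ℝ] F).le_opNorm v
  have hL : 0 < ‖(L : E →L[ℝ] F)‖ :=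
    pos_of_mul_pos_left (hLv.trans_le hLv_le) (norm_nonneg v)
  calc ‖v‖ ^ (-s) = ‖(L : E →L[ℝ] F)‖ ^ s * (‖(L : E →L[ℝ] F)‖ * ‖v‖) ^ (-s) := by
        rw [Real.mul_rpow hL.le (norm_nonneg v), ← mul_assoc, ← Real.rpow_add hL,
          add_neg_cancel, Real.rpow_zero, one_mul]
    _ ≤ ‖(L : E →L[ℝ] F)‖ ^ s * ‖L v‖ ^ (-s) := by
        gcongr ‖(L : E →L[ℝ] F)‖ ^ s * ?_
        exact Real.rpow_le_rpow_of_nonpos hLv hLv_le (neg_nonpos.2 hs)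

theorem prod_norm_sub_rpow_neg_le {E : Type*} [NormedAddCommGroup E] [NormedSpace ℝ E]
    (A : ι → E ≃L[ℝ] E) {a : ι → ℝ} (ha : ∀ i, 0 ≤ a i) {s : ℝ} (hs : 0 < s)
    (hsum : ∑ i, a i = s) (x y : E) :
    ∏ i, ‖x - A i y‖ ^ (-a i) ≤
      (∑ i, ‖((A i).symm : E →L[ℝ] E)‖ ^ s) * ∑ i, ‖(A i).symm x - y‖ ^ (-s) := by
  set C := ∑ i, ‖((A i).symm : E →L[ℝ] E)‖ ^ s
  have hC : ∀ i, a i / s * ‖((A i).symm : E →L[ℝ] E)‖ ^ s ≤ C := fun i =>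
    calc a i / s * ‖((A i).symm : E →L[ℝ] E)‖ ^ s
        ≤ 1 * ‖((A i).symm : E →L[ℝ] E)‖ ^ s := by
          gcongr
          rw [div_le_one hs, ← hsum]
          exact Finset.single_le_sum (fun j _ => ha j) (Finset.mem_univ i)
      _ ≤ C := (one_mul _).trans_le <| Finset.single_le_sum
          (f := fun j => ‖((A j).symm : E →L[ℝ] E)‖ ^ s)
          (fun j _ => Real.rpow_nonneg (norm_nonneg _) _) (Finset.mem_univ i)
  calc ∏ i, ‖x - A i y‖ ^ (-a i) ≤ ∑ i, a i / s * ‖x - A i y‖ ^ (-s) :=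
        Real.prod_rpow_neg_le_sum_mul_rpow_neg (fun _ => norm_nonneg _) ha hs hsum
    _ ≤ ∑ i, a i / s * (‖((A i).symm : E →L[ℝ] E)‖ ^ s * ‖(A i).symm x - y‖ ^ (-s)) := by
        gcongr with i
        · exact div_nonneg (ha i) hs.le
        · simpa using (A i).symm.norm_rpow_neg_le (x - A i y) hs.le
    _ ≤ ∑ i, C * ‖(A i).symm x - y‖ ^ (-s) := Finset.sum_le_sum fun i _ => by
        rw [← mul_assoc]
        exact mul_le_mul_of_nonneg_right (hC i) (Real.rpow_nonneg (norm_nonneg _) _)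
    _ = C * ∑ i, ‖(A i).symm x - y‖ ^ (-s) := (Finset.mul_sum _ _ _).symm

theorem ofReal_norm_integral_smul_le_sum_lintegral {X E : Type*} [MeasurableSpace X]
    {μ : Measure X} [NormedAddCommGroup E] [NormedSpace ℝ E] {K : X → ℝ} {k : ι → X → ℝ}
    {f : X → E} {c : ℝ} (hk : ∀ i, Measurable (k i)) (hk0 : ∀ i y, 0 ≤ k i y)
    (hf : AEStronglyMeasurable f μ) (hKk : ∀ y, ‖K y‖ ≤ c * ∑ i, k i y) :
    ENNReal.ofReal ‖∫ y, K y • f y ∂μ‖ ≤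
      ENNReal.ofReal c * ∑ i, ∫⁻ y, ENNReal.ofReal (k i y * ‖f y‖) ∂μ := by
  have hpt : ∀ y, ‖K y • f y‖ₑ ≤ ENNReal.ofReal c * ∑ i, ENNReal.ofReal (k i y * ‖f y‖) := by
    intro y
    have hnonneg : ∀ i ∈ Finset.univ, 0 ≤ k i y * ‖f y‖ :=
      fun i _ => mul_nonneg (hk0 i y) (norm_nonneg _)
    rw [← ofReal_norm, norm_smul, ← ENNReal.ofReal_sum_of_nonneg hnonneg,
      ← ENNReal.ofReal_mul' (Finset.sum_nonneg hnonneg), ← Finset.sum_mul, ← mul_assoc]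
    exact ENNReal.ofReal_le_ofReal (mul_le_mul_of_nonneg_right (hKk y) (norm_nonneg _))
  calc ENNReal.ofReal ‖∫ y, K y • f y ∂μ‖ = ‖∫ y, K y • f y ∂μ‖ₑ := ofReal_norm _
    _ ≤ ∫⁻ y, ‖K y • f y‖ₑ ∂μ := enorm_integral_le_lintegral_enorm _
    _ ≤ ∫⁻ y, ENNReal.ofReal c * ∑ i, ENNReal.ofReal (k i y * ‖f y‖) ∂μ := lintegral_mono hpt
    _ = ENNReal.ofReal c * ∑ i, ∫⁻ y, ENNReal.ofReal (k i y * ‖f y‖) ∂μ := by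
        rw [lintegral_const_mul' _ _ ENNReal.ofReal_ne_top]
        congr 1
        exact lintegral_finsetSum' _ fun i _ =>
          ((hk i).aemeasurable.mul hf.norm.aemeasurable).ennreal_ofReal

end KernelBounds

open MeasureTheory Metric ENNReal in
theorem stmt0_general {n m : ℕ} (α : ℝ) (hαn : α < n)
    (A : Fin m → (En n ≃L[ℝ] En n)) (a : Fin m → ℝ) (ha : ∀ j, 0 < a j)
    (hsum : ∑ j, a j = n - α) :
    ∃ C > 0, ∀ f : En n → ℂ, Measurable f → ∀ x : En n,
      MeasureTheory.Integrable (fun y => (∏ j, ‖x - A j y‖ ^ (-(a j))) • f y) →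
      ENNReal.ofReal ‖∫ y, (∏ j, ‖x - A j y‖ ^ (-(a j))) • f y‖ ≤
        ENNReal.ofReal C *
          ∑ j, ∫⁻ y, ENNReal.ofReal (‖(A j).symm x - y‖ ^ (α - n) * ‖f y‖) := by
  have hs : 0 < (n : ℝ) - α := sub_pos.2 hαn
  set C₀ := ∑ j, ‖((A j).symm : En n →L[ℝ] En n)‖ ^ ((n : ℝ) - α)
  have hC₀ : 0 ≤ C₀ := Finset.sum_nonneg fun j _ => Real.rpow_nonneg (norm_nonneg _) _
  refine ⟨C₀ + 1, by positivity, fun f hf x _ => ?_⟩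
  refine ofReal_norm_integral_smul_le_sum_lintegral
    (k := fun j y => ‖(A j).symm x - y‖ ^ (α - n)) (fun j => by fun_prop)
    (fun j y => Real.rpow_nonneg (norm_nonneg _) _) hf.aestronglyMeasurable fun y => ?_
  rw [Real.norm_of_nonneg (Finset.prod_nonneg fun j _ => Real.rpow_nonneg (norm_nonneg _) _)]
  calc ∏ j, ‖x - A j y‖ ^ (-a j) ≤ C₀ * ∑ j, ‖(A j).symm x - y‖ ^ (α - n) := by
        simpa only [neg_sub] using prod_norm_sub_rpow_neg_le A (fun j => (ha j).le) hs hsum x y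
    _ ≤ (C₀ + 1) * ∑ j, ‖(A j).symm x - y‖ ^ (α - n) := by
        gcongr
        linarith

open MeasureTheory Metric ENNReal in
/-- pointwise domination of the generalized Riesz potential kernel by a sum of
Riesz kernels. -/
theorem stmt0 {n m : ℕ} (hn : 0 < n) (hm : 1 ≤ m) (α : ℝ) (hα0 : 0 < α) (hαn : α < n)
    (A : Fin m → (En n ≃L[ℝ] En n)) (a : Fin m → ℝ) (ha : ∀ j, 0 < a j)
    (hsum : ∑ j, a j = n - α) :
    ∃ C > 0, ∀ f : En n → ℂ, Measurable f → ∀ x : En n,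
      MeasureTheory.Integrable (fun y => (∏ j, ‖x - A j y‖ ^ (-(a j))) • f y) →
      ENNReal.ofReal ‖∫ y, (∏ j, ‖x - A j y‖ ^ (-(a j))) • f y‖ ≤
        ENNReal.ofReal C *
          ∑ j, ∫⁻ y, ENNReal.ofReal (‖(A j).symm x - y‖ ^ (α - n) * ‖f y‖) :=
  stmt0_general α hαn A a ha hsum
end

section
/- The function $w : \mathbb{R}^n \to [0,\infty)$ defined by $w(x) = \log(1/|x|)$ for $0 < |x| < 1/e$ and $w(x) = 1$ for $|x| \geq 1/e$ belongs to the Muckenhoupt class $\mathcal{A}_1$, and moreover for every invertible $n \times n$ matrix $A$ there exists $C > 0$ with $w(Ax) \leq C\, w(x)$ for a.e. $x \in \mathbb{R}^n$. -/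
open MeasureTheory Metric ENNReal

/-!
For `x ≠ 0` the weight is `w(x) = max 1 (log ‖x‖⁻¹)`, which gives the subadditivity
`w(s) ≤ w(t) + log⁺ (t / s)` of its radial profile. On a ball `B = B(x₀, r)` put
`R = ‖x₀‖ + r`. Every point of `B` has norm `< R`, so `w(R) ≤ ess inf_B w`; on the other hand
`w ≤ w(R) + log⁺ (R / ‖·‖)` on `B`, and the average of `log⁺ (R / ‖·‖)` over `B` is at most `3ⁿ`:
if `‖x₀‖ ≤ 2r` then `B ⊆ B(0, 3r)` and the layer-cake formula gives
`∫_{B(0,R)} log⁺ (R / ‖y‖) dy ≤ |B(0, R)|`, and otherwise `R / ‖y‖ ≤ 3` on `B`.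
The same subadditivity with `‖x‖ ≤ ‖A⁻¹‖ ‖A x‖` gives `w(A x) ≤ (1 + log⁺ ‖A⁻¹‖) w(x)`.
-/

open Filter Set Real Module Measure

noncomputable def logWeight (t : ℝ) : ℝ :=
  if t < (exp 1)⁻¹ then log t⁻¹ else 1

lemma logWeight_zero : logWeight 0 = 0 := by
  simp [logWeight, exp_pos]

lemma logWeight_of_pos {t : ℝ} (ht : 0 < t) : logWeight t = max 1 (log t⁻¹) := by
  have hlog : 1 < log t⁻¹ ↔ t < (exp 1)⁻¹ := by
    rw [lt_log_iff_exp_lt (inv_pos.2 ht), lt_inv_comm₀ (exp_pos 1) ht]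
  unfold logWeight
  split_ifs with h
  · exact (max_eq_right (hlog.2 h).le).symm
  · exact (max_eq_left (not_lt.1 (mt hlog.1 h))).symm

lemma one_le_logWeight {t : ℝ} (ht : 0 < t) : 1 ≤ logWeight t := by
  rw [logWeight_of_pos ht]
  exact le_max_left _ _

lemma logWeight_nonneg {t : ℝ} (ht : 0 ≤ t) : 0 ≤ logWeight t := by
  rcases ht.eq_or_lt with rfl | ht
  · rw [logWeight_zero]
  · exact zero_le_one.trans (one_le_logWeight ht)

lemma logWeight_le_logWeight {s t : ℝ} (hs : 0 < s) (hst : s ≤ t) :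
    logWeight t ≤ logWeight s := by
  have ht := hs.trans_le hst
  rw [logWeight_of_pos hs, logWeight_of_pos ht]
  gcongr

lemma logWeight_le_add_posLog {s t : ℝ} (hs : 0 ≤ s) (ht : 0 < t) :
    logWeight s ≤ logWeight t + log⁺ (t / s) := by
  rcases hs.eq_or_lt with rfl | hs
  · rw [logWeight_zero]
    linarith [one_le_logWeight ht, posLog_nonneg (x := t / 0)]
  have hsplit : log s⁻¹ = log t⁻¹ + log (t / s) := by
    rw [← log_mul (inv_ne_zero ht.ne') (div_pos ht hs).ne']
    field_simp
  rw [logWeight_of_pos hs, logWeight_of_pos ht, posLog_apply]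
  refine max_le ?_ ?_
  · linarith [le_max_left 1 (log t⁻¹), le_max_left 0 (log (t / s))]
  · linarith [le_max_right 1 (log t⁻¹), le_max_right 0 (log (t / s))]

lemma measurable_logWeight : Measurable logWeight :=
  Measurable.ite measurableSet_Iio measurable_inv.log measurable_const

lemma logWeight_norm_apply_le {E F : Type*} [NormedAddCommGroup E] [NormedSpace ℝ E]
    [NormedAddCommGroup F] [NormedSpace ℝ F] (A : E ≃L[ℝ] F) (x : E) :
    logWeight ‖A x‖ ≤ (1 + log⁺ ‖(A.symm : F →L[ℝ] E)‖) * logWeight ‖x‖ := by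
  rcases eq_or_ne x 0 with rfl | hx
  · simp [logWeight_zero]
  have hx₀ : 0 < ‖x‖ := norm_pos_iff.2 hx
  have hAx : 0 < ‖A x‖ := norm_pos_iff.2 (A.map_ne_zero_iff.2 hx)
  have hratio : ‖x‖ / ‖A x‖ ≤ ‖(A.symm : F →L[ℝ] E)‖ := by
    rw [div_le_iff₀ hAx]
    simpa using (A.symm : F →L[ℝ] E).le_opNorm (A x)
  have hw := one_le_logWeight hx₀
  calc logWeight ‖A x‖ ≤ logWeight ‖x‖ + log⁺ (‖x‖ / ‖A x‖) :=
        logWeight_le_add_posLog hAx.le hx₀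
    _ ≤ logWeight ‖x‖ + log⁺ ‖(A.symm : F →L[ℝ] E)‖ * logWeight ‖x‖ := by
        gcongr
        exact (posLog_le_posLog (by positivity) hratio).trans
          (le_mul_of_one_le_right posLog_nonneg hw)
    _ = (1 + log⁺ ‖(A.symm : F →L[ℝ] E)‖) * logWeight ‖x‖ := by ring

lemma Filter.isCoboundedUnder_ge_of_countableInterFilter {α : Type*} {l : Filter α}
    [CountableInterFilter l] [NeBot l] (f : α → ℝ) : IsCoboundedUnder (· ≥ ·) l f := by
  obtain ⟨k, hk⟩ : ∃ k : ℕ, ∃ᶠ x in l, f x ≤ k := by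
    by_contra! h
    obtain ⟨x, hx⟩ := (eventually_countable_forall.2 h).exists
    obtain ⟨k, hk⟩ := exists_nat_gt (f x)
    exact (hx k).not_gt hk
  exact .of_frequently_le hk

lemma lintegral_exp_neg_Ioi_zero : ∫⁻ t in Ioi (0 : ℝ), ENNReal.ofReal (exp (-t)) = 1 := by
  have hint : IntegrableOn (fun t : ℝ => exp (-t)) (Ioi 0) := by
    simpa using exp_neg_integrableOn_Ioi 0 one_pos
  rw [← ofReal_integral_eq_lintegral_ofReal hint (ae_of_all _ fun t => (exp_pos (-t)).le),
    integral_exp_neg_Ioi_zero, ENNReal.ofReal_one]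

section AddHaar

variable {E : Type*} [NormedAddCommGroup E] [NormedSpace ℝ E] [FiniteDimensional ℝ E]
  [MeasurableSpace E] [BorelSpace E] [Nontrivial E] (μ : Measure E) [μ.IsAddHaarMeasure]

lemma lintegral_posLog_div_norm_le {R : ℝ} (hR : 0 < R) :
    ∫⁻ y, ENNReal.ofReal (log⁺ (R / ‖y‖)) ∂μ ≤ μ (ball 0 R) := by
  have hsuperlevel : ∀ t ∈ Ioi (0 : ℝ),
      μ {y | t < log⁺ (R / ‖y‖)} ≤ ENNReal.ofReal (exp (-t)) * μ (ball 0 R) := by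
    intro t (ht : 0 < t)
    have hsub : {y : E | t < log⁺ (R / ‖y‖)} ⊆ ball 0 (exp (-t) * R) := by
      intro y (hy : t < log⁺ (R / ‖y‖))
      rw [mem_ball_zero_iff]
      rcases (norm_nonneg y).eq_or_lt with hy0 | hy0
      · rw [← hy0]; positivity
      have hlog : t < log (R / ‖y‖) := by
        rcases lt_max_iff.1 hy with h | h
        · exact absurd ht h.not_gt
        · exact h
      rw [lt_log_iff_exp_lt (by positivity), lt_div_iff₀ hy0] at hlog
      rw [exp_neg, inv_mul_eq_div, lt_div_iff₀ (exp_pos t)]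
      linarith
    calc μ {y | t < log⁺ (R / ‖y‖)} ≤ μ (ball 0 (exp (-t) * R)) := measure_mono hsub
      _ = ENNReal.ofReal (exp (-t) ^ finrank ℝ E) * μ (ball 0 R) :=
        addHaar_ball_mul μ 0 (exp_pos _).le R
      _ ≤ ENNReal.ofReal (exp (-t)) * μ (ball 0 R) := by
        gcongr
        exact pow_le_of_le_one (exp_pos _).le (exp_le_one_iff.2 (by linarith)) finrank_pos.ne'
  rw [lintegral_eq_lintegral_meas_lt μ (ae_of_all _ fun _ => posLog_nonneg) (by fun_prop)]
  calc ∫⁻ t in Ioi 0, μ {y | t < log⁺ (R / ‖y‖)}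
      ≤ ∫⁻ t in Ioi 0, ENNReal.ofReal (exp (-t)) * μ (ball 0 R) :=
        setLIntegral_mono' measurableSet_Ioi hsuperlevel
    _ = μ (ball 0 R) := by
        rw [lintegral_mul_const _ (by fun_prop), lintegral_exp_neg_Ioi_zero, one_mul]

lemma setLIntegral_posLog_div_norm_ball_le (x₀ : E) {r : ℝ} (hr : 0 < r) :
    ∫⁻ y in ball x₀ r, ENNReal.ofReal (log⁺ ((‖x₀‖ + r) / ‖y‖)) ∂μ ≤
      3 ^ finrank ℝ E * μ (ball x₀ r) := by
  rcases le_or_gt ‖x₀‖ (2 * r) with hnear | hfar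
  · calc ∫⁻ y in ball x₀ r, ENNReal.ofReal (log⁺ ((‖x₀‖ + r) / ‖y‖)) ∂μ
        ≤ ∫⁻ y, ENNReal.ofReal (log⁺ ((‖x₀‖ + r) / ‖y‖)) ∂μ := setLIntegral_le_lintegral _ _
      _ ≤ μ (ball 0 (‖x₀‖ + r)) := lintegral_posLog_div_norm_le μ (by positivity)
      _ ≤ μ (ball 0 (3 * r)) := measure_mono (ball_subset_ball (by linarith))
      _ = 3 ^ finrank ℝ E * μ (ball x₀ r) := by
        rw [addHaar_ball_mul μ 0 zero_le_three, addHaar_ball_center μ x₀, ENNReal.ofReal_pow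
          zero_le_three, ENNReal.ofReal_ofNat]
  · have hbound : ∀ y ∈ ball x₀ r,
        ENNReal.ofReal (log⁺ ((‖x₀‖ + r) / ‖y‖)) ≤ 3 ^ finrank ℝ E := by
      intro y hy
      have hy_far : ‖x₀‖ - r < ‖y‖ := by
        rw [mem_ball_iff_norm'] at hy
        linarith [norm_sub_norm_le x₀ y]
      have hratio : (‖x₀‖ + r) / ‖y‖ ≤ 3 := by
        rw [div_le_iff₀ (by linarith)]
        linarith
      have hposLog : log⁺ ((‖x₀‖ + r) / ‖y‖) ≤ 3 :=
        max_le zero_le_three ((log_le_self (by positivity)).trans hratio)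
      calc ENNReal.ofReal (log⁺ ((‖x₀‖ + r) / ‖y‖)) ≤ 3 ^ 1 := by
            simpa using ENNReal.ofReal_le_ofReal hposLog
        _ ≤ 3 ^ finrank ℝ E := pow_le_pow_right₀ (by norm_num) finrank_pos
    calc ∫⁻ y in ball x₀ r, ENNReal.ofReal (log⁺ ((‖x₀‖ + r) / ‖y‖)) ∂μ
        ≤ ∫⁻ _ in ball x₀ r, 3 ^ finrank ℝ E ∂μ := setLIntegral_mono' measurableSet_ball hbound
      _ = 3 ^ finrank ℝ E * μ (ball x₀ r) := setLIntegral_const _ _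

lemma setLIntegral_logWeight_norm_ball_le (x₀ : E) {r : ℝ} (hr : 0 < r) :
    ∫⁻ y in ball x₀ r, ENNReal.ofReal (logWeight ‖y‖) ∂μ ≤
      (1 + 3 ^ finrank ℝ E) * ENNReal.ofReal (logWeight (‖x₀‖ + r)) * μ (ball x₀ r) := by
  have hR : 0 < ‖x₀‖ + r := by positivity
  set m := ENNReal.ofReal (logWeight (‖x₀‖ + r))
  have hm : 1 ≤ m := ENNReal.one_le_ofReal.2 (one_le_logWeight hR)
  calc ∫⁻ y in ball x₀ r, ENNReal.ofReal (logWeight ‖y‖) ∂μ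
      ≤ ∫⁻ y in ball x₀ r, (m + ENNReal.ofReal (log⁺ ((‖x₀‖ + r) / ‖y‖))) ∂μ := by
        refine lintegral_mono fun y => ?_
        rw [← ENNReal.ofReal_add (logWeight_nonneg hR.le) posLog_nonneg]
        exact ENNReal.ofReal_le_ofReal (logWeight_le_add_posLog (norm_nonneg y) hR)
    _ = m * μ (ball x₀ r) + ∫⁻ y in ball x₀ r, ENNReal.ofReal (log⁺ ((‖x₀‖ + r) / ‖y‖)) ∂μ := by
        rw [lintegral_add_left measurable_const, setLIntegral_const]
    _ ≤ m * μ (ball x₀ r) + 3 ^ finrank ℝ E * m * μ (ball x₀ r) := by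
        grw [setLIntegral_posLog_div_norm_ball_le μ x₀ hr, ← le_mul_of_one_le_right' hm]
    _ = (1 + 3 ^ finrank ℝ E) * m * μ (ball x₀ r) := by ring

lemma integrableOn_logWeight_norm_ball (x₀ : E) {r : ℝ} (hr : 0 < r) :
    IntegrableOn (fun y => logWeight ‖y‖) (ball x₀ r) μ := by
  refine ⟨(measurable_logWeight.comp measurable_norm).aestronglyMeasurable, ?_⟩
  rw [hasFiniteIntegral_iff_ofReal (ae_of_all _ fun y => logWeight_nonneg (norm_nonneg y))]
  exact (setLIntegral_logWeight_norm_ball_le μ x₀ hr).trans_lt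
    (by finiteness [measure_ball_lt_top (μ := μ) (x := x₀) (r := r)])

lemma setIntegral_logWeight_norm_ball_le (x₀ : E) {r : ℝ} (hr : 0 < r) :
    ∫ y in ball x₀ r, logWeight ‖y‖ ∂μ ≤
      (1 + 3 ^ finrank ℝ E) * (μ (ball x₀ r)).toReal * logWeight (‖x₀‖ + r) := by
  rw [integral_eq_lintegral_of_nonneg_ae (ae_of_all _ fun y => logWeight_nonneg (norm_nonneg y))
    (measurable_logWeight.comp measurable_norm).aestronglyMeasurable]
  refine (ENNReal.toReal_mono ?_ (setLIntegral_logWeight_norm_ball_le μ x₀ hr)).trans_eq ?_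
  · finiteness [measure_ball_lt_top (μ := μ) (x := x₀) (r := r)]
  · rw [ENNReal.toReal_mul, ENNReal.toReal_mul, ENNReal.toReal_add one_ne_top (by finiteness),
      ENNReal.toReal_pow, ENNReal.toReal_ofReal (logWeight_nonneg (by positivity))]
    simp only [ENNReal.toReal_one, ENNReal.toReal_ofNat]
    ring

lemma logWeight_le_essInf (x₀ : E) {r : ℝ} (hr : 0 < r) :
    logWeight (‖x₀‖ + r) ≤ essInf (fun y => logWeight ‖y‖) (μ.restrict (ball x₀ r)) := by
  have : NeBot (ae (μ.restrict (ball x₀ r))) :=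
    ae_neBot.2 (Measure.restrict_eq_zero.not.2 (measure_ball_pos μ x₀ hr).ne')
  refine le_essInf_of_ae_le _ ?_ (isCoboundedUnder_ge_of_countableInterFilter _)
  filter_upwards [ae_restrict_mem measurableSet_ball, ae_restrict_of_ae (μ.ae_ne 0)]
    with y hy hy0
  rw [mem_ball_iff_norm] at hy
  exact logWeight_le_logWeight (norm_pos_iff.2 hy0) (by linarith [norm_sub_norm_le y x₀])

end AddHaar

theorem isA1_logWeight_norm {n : ℕ} (hn : 0 < n) : IsA1 n (fun x => logWeight ‖x‖) := by
  have : NeZero n := ⟨hn.ne'⟩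
  refine ⟨fun x => logWeight_nonneg (norm_nonneg x),
    fun x => ⟨ball x 1, ball_mem_nhds x one_pos, integrableOn_logWeight_norm_ball volume x one_pos⟩,
    1 + 3 ^ n, by positivity, fun x r hr => ?_⟩
  calc ∫ y in ball x r, logWeight ‖y‖
      ≤ (1 + 3 ^ n) * (volume (ball x r)).toReal * logWeight (‖x‖ + r) := by
        simpa using setIntegral_logWeight_norm_ball_le volume x hr
    _ ≤ (1 + 3 ^ n) * (volume (ball x r)).toReal *
          essInf (fun y => logWeight ‖y‖) (volume.restrict (ball x r)) := by
        gcongr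
        exact logWeight_le_essInf volume x hr

open MeasureTheory in
/-- the weight `w(x) = log(1/|x|)` for `|x| < 1/e`, `w(x) = 1` otherwise,
belongs to `𝒜₁` and satisfies `w(Ax) ≲ w(x)` for every invertible matrix `A`. -/
theorem stmt7 {n : ℕ} (hn : 0 < n) :
    IsA1 n (fun x : En n => if ‖x‖ < (Real.exp 1)⁻¹ then Real.log ‖x‖⁻¹ else 1) ∧
    ∀ A : En n ≃L[ℝ] En n, ∃ C > 0, ∀ᵐ x : En n,
      (if ‖A x‖ < (Real.exp 1)⁻¹ then Real.log ‖A x‖⁻¹ else 1) ≤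
        C * (if ‖x‖ < (Real.exp 1)⁻¹ then Real.log ‖x‖⁻¹ else 1) :=
  ⟨isA1_logWeight_norm hn, fun A =>
    ⟨_, add_pos_of_pos_of_nonneg one_pos posLog_nonneg, ae_of_all _ (logWeight_norm_apply_le A)⟩⟩
end
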